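/- arXiv:2105.03187 — 2 statements merged into one kernel-verified Lean document; each statement's English description precedes it below -/
import Mathlib

section
/- For subsets R, C ⊆ V, the rank of the submatrix of the generic response matrix 𝕋 with rows indexed by C and columns indexed by R equals b(R→C), the maximum number of pairwise vertex-disjoint directed paths from R to C in (V,E). -/
open Matrix

/-- A directed path in the graph with edge set `E`: a nonempty list of pairwise distinct
vertices in which every pair of consecutive vertices is an edge. A single vertex is a
path of length `0`. -/
def IsDiPath {V : Type*} (E : Finset (V × V)) (l : List V) : Prop :=
  l ≠ [] ∧ l.Nodup ∧ l.Chain' (fun a b => (a, b) ∈ E)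

/-- A directed path starting at a vertex of `R` and ending at a vertex of `C`. -/
def IsDiPathFromTo {V : Type*} (E : Finset (V × V)) (R C : Finset V) (l : List V) : Prop :=
  IsDiPath E l ∧ (∃ r ∈ R, l.head? = some r) ∧ (∃ c ∈ C, l.getLast? = some c)

/-- There exist `n` pairwise vertex-disjoint directed paths from `R` to `C`. -/
def HasDisjointPaths {V : Type*} (E : Finset (V × V)) (R C : Finset V) (n : ℕ) : Prop :=
  ∃ f : Fin n → List V, (∀ k, IsDiPathFromTo E R C (f k)) ∧
    ∀ k l : Fin n, k ≠ l → ∀ v : V, v ∈ f k → v ∉ f l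

/-- `b(R→C)`: the maximum number of pairwise vertex-disjoint directed paths from `R`
to `C`. -/
noncomputable def maxDisjointPaths {V : Type*} (E : Finset (V × V)) (R C : Finset V) : ℕ :=
  sSup {n : ℕ | HasDisjointPaths E R C n}

/-- The generic network matrix `𝔾` over the fraction field of `ℝ[Xₑ : e ∈ E]`:
`𝔾 j i = X (i,j)` if `(i,j) ∈ E`, and `0` otherwise. -/
noncomputable def genG {V : Type*} [Fintype V] [DecidableEq V] (E : Finset (V × V)) :
    Matrix V V (FractionRing (MvPolynomial {e : V × V // e ∈ E} ℝ)) :=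
  Matrix.of fun j i =>
    if h : (i, j) ∈ E then
      algebraMap (MvPolynomial {e : V × V // e ∈ E} ℝ) _ (MvPolynomial.X ⟨(i, j), h⟩)
    else 0

/-- The generic response matrix `𝕋 = (I - 𝔾)⁻¹`. -/
noncomputable def genT {V : Type*} [Fintype V] [DecidableEq V] (E : Finset (V × V)) :
    Matrix V V (FractionRing (MvPolynomial {e : V × V // e ∈ E} ℝ)) :=
  (1 - genG E)⁻¹

/-!
By Jacobi's complementary minor theorem, a square minor `𝕋[c, r]` of `𝕋 = (1 - 𝔾)⁻¹` is nonzero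
iff the complementary minor of `1 - 𝔾`, on rows `V ∖ r` and columns `V ∖ c`, is nonzero. In the
permutation expansion of the latter a term survives exactly for the routings, the bijections
`V ∖ c → V ∖ r` moving every vertex along an edge or not at all, and distinct routings give distinct
monomials, since a routing is determined by the edges it uses. So the minor is nonzero iff a routing
exists. The orbits of a routing started at `r` are vertex-disjoint paths ending in `c`; conversely,
advancing every vertex one step along its path turns disjoint paths from `r` to `c` into a routing.
Thus nonzero `k × k` minors of `𝕋_{C,R}` correspond to families of `k` disjoint paths from `R` to
`C`, and the rank, the largest size of a nonzero minor, is `b(R → C)`.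
-/

section

open Function Set

namespace Matrix

variable {R : Type*} [CommRing R] {ι κ : Type*} [Fintype ι] [Fintype κ] [DecidableEq ι]
  [DecidableEq κ]

theorem det_toBlocks₁₁_inv_mul_det (M : Matrix (ι ⊕ κ) (ι ⊕ κ) R) (hM : IsUnit M.det) :
    M⁻¹.toBlocks₁₁.det * M.det = M.toBlocks₂₂.det := by
  obtain ⟨A, B, C, D, rfl⟩ : ∃ A B C D, M = fromBlocks A B C D :=
    ⟨_, _, _, _, (fromBlocks_toBlocks M).symm⟩
  obtain ⟨P, Q, S, U, hinv⟩ : ∃ P Q S U, (fromBlocks A B C D)⁻¹ = fromBlocks P Q S U :=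
    ⟨_, _, _, _, (fromBlocks_toBlocks _).symm⟩
  have h := (fromBlocks A B C D).mul_nonsing_inv hM
  rw [hinv, fromBlocks_multiply, ← fromBlocks_one, fromBlocks_inj] at h
  have key : fromBlocks A B C D * fromBlocks P 0 S 1 = fromBlocks 1 B 0 D := by
    simp [fromBlocks_multiply, h.1, h.2.2.1]
  calc (fromBlocks A B C D)⁻¹.toBlocks₁₁.det * (fromBlocks A B C D).det
      = (fromBlocks A B C D * fromBlocks P 0 S 1).det := by
        rw [det_mul, det_fromBlocks_zero₁₂, det_one, mul_one, mul_comm, hinv,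
          toBlocks_fromBlocks₁₁]
    _ = (fromBlocks A B C D).toBlocks₂₂.det := by
        rw [key, det_fromBlocks_zero₂₁, det_one, one_mul, toBlocks_fromBlocks₂₂]

variable {V : Type*} [Fintype V] [DecidableEq V]

theorem det_submatrix_inv_mul_det (A : Matrix V V R) (hA : IsUnit A.det) (e₁ e₂ : ι ⊕ κ ≃ V) :
    (A⁻¹.submatrix (e₂ ∘ Sum.inl) (e₁ ∘ Sum.inl)).det * (A.submatrix e₁ e₂).det =
      (A.submatrix (e₁ ∘ Sum.inr) (e₂ ∘ Sum.inr)).det := by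
  have hM : IsUnit (A.submatrix e₁ e₂).det := by
    rwa [← isUnit_iff_isUnit_det, isUnit_submatrix_equiv, isUnit_iff_isUnit_det]
  have h := det_toBlocks₁₁_inv_mul_det _ hM
  rwa [inv_submatrix_equiv] at h

theorem det_submatrix_inv_ne_zero_iff (A : Matrix V V R) (hA : IsUnit A.det) (e₁ e₂ : ι ⊕ κ ≃ V) :
    (A⁻¹.submatrix (e₂ ∘ Sum.inl) (e₁ ∘ Sum.inl)).det ≠ 0 ↔
      (A.submatrix (e₁ ∘ Sum.inr) (e₂ ∘ Sum.inr)).det ≠ 0 := by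
  have hM : IsUnit (A.submatrix e₁ e₂).det := by
    rwa [← isUnit_iff_isUnit_det, isUnit_submatrix_equiv, isUnit_iff_isUnit_det]
  rw [← det_submatrix_inv_mul_det A hA e₁ e₂, ne_eq, ne_eq, hM.mul_left_eq_zero]

variable {K : Type*} [Field K] {m n : Type*} [Fintype n]

theorem card_le_rank_of_det_submatrix_ne_zero (M : Matrix m n K) (f : ι → m) (g : ι → n)
    (h : (M.submatrix f g).det ≠ 0) : Fintype.card ι ≤ M.rank :=
  (rank_of_det_ne_zero h).symm.le.trans (rank_submatrix_le M f g)

theorem exists_linearIndependent_rows [Fintype m] (M : Matrix m n K) {k : ℕ} (hk : M.rank = k) :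
    ∃ f : Fin k → m, Injective f ∧ LinearIndependent K (M.submatrix f id).row := by
  obtain ⟨κ', a, ha, hspan, hli⟩ := exists_linearIndependent' K M.row
  have : Finite κ' := Finite.of_injective a ha
  have := Fintype.ofFinite κ'
  have hcard : Fintype.card κ' = k := by
    rw [← hk, rank_eq_finrank_span_row, ← hspan, finrank_span_eq_card hli]
  let e := (Fintype.equivFinOfCardEq hcard).symm
  exact ⟨a ∘ e, ha.comp e.injective, hli.comp e e.injective⟩

theorem exists_det_submatrix_ne_zero [Fintype m] (M : Matrix m n K) :
    ∃ (f : Fin M.rank → m) (g : Fin M.rank → n), Injective f ∧ Injective g ∧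
      (M.submatrix f g).det ≠ 0 := by
  obtain ⟨f, hf, hfli⟩ := exists_linearIndependent_rows M rfl
  have hrank : (M.submatrix f id)ᵀ.rank = M.rank := by
    rw [rank_transpose, hfli.rank_matrix, Fintype.card_fin]
  obtain ⟨g, hg, hgli⟩ := exists_linearIndependent_rows (M.submatrix f id)ᵀ hrank
  refine ⟨f, g, hf, hg, ?_⟩
  rw [← det_transpose, ← isUnit_iff_ne_zero, ← isUnit_iff_isUnit_det,
    ← linearIndependent_rows_iff_isUnit]
  exact hgli

end Matrix

theorem Function.Injective.exists_sum_equiv {ι V : Type*} [Fintype ι] [Fintype V] {r : ι → V}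
    (hr : Injective r) :
    ∃ e : ι ⊕ Fin (Fintype.card V - Fintype.card ι) ≃ V, e ∘ Sum.inl = r := by
  classical
  have hcard : Fintype.card ((range r)ᶜ : Set V) = Fintype.card V - Fintype.card ι := by
    rw [Fintype.card_compl_set, Set.card_range_of_injective hr]
  refine ⟨(Equiv.sumCongr (Equiv.ofInjective r hr) (Fintype.equivFinOfCardEq hcard).symm).trans
    (Equiv.Set.sumCompl _), funext fun i => ?_⟩
  simp

theorem Equiv.range_comp_inr {α β γ : Type*} (e : α ⊕ β ≃ γ) :
    range (e ∘ Sum.inr) = (range (e ∘ Sum.inl))ᶜ := by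
  rw [range_comp, range_comp, ← Set.compl_range_inl, e.image_compl]

namespace Set.InjOn

variable {α : Type*} {g : α → α} {S T : Set α}

theorem iterate_eq_iterate (hinj : InjOn g Tᶜ) (hmaps : MapsTo g Tᶜ Sᶜ) {x y : α} (hx : x ∈ S)
    (hy : y ∈ S) {a b : ℕ} (ha : ∀ i < a, g^[i] x ∉ T) (hb : ∀ i < b, g^[i] y ∉ T)
    (h : g^[a] x = g^[b] y) : x = y ∧ a = b := by
  induction a generalizing b with
  | zero =>
    cases b with
    | zero => exact ⟨h, rfl⟩
    | succ b =>
      rw [iterate_succ_apply'] at h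
      exact absurd (h ▸ hx) (hmaps (hb b b.lt_succ_self))
  | succ a ih =>
    cases b with
    | zero =>
      rw [iterate_succ_apply'] at h
      exact absurd (h ▸ hy) (hmaps (ha a a.lt_succ_self))
    | succ b =>
      rw [iterate_succ_apply', iterate_succ_apply'] at h
      have h' := hinj (ha a a.lt_succ_self) (hb b b.lt_succ_self) h
      obtain ⟨hxy, rfl⟩ := ih (fun i hi => ha i (hi.trans a.lt_succ_self))
        (fun i hi => hb i (hi.trans b.lt_succ_self)) h'
      exact ⟨hxy, rfl⟩

theorem exists_iterate_mem [Finite α] (hinj : InjOn g Tᶜ) (hmaps : MapsTo g Tᶜ Sᶜ) {x : α}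
    (hx : x ∈ S) : ∃ a, g^[a] x ∈ T := by
  by_contra! hT
  refine not_injective_infinite_finite (fun a => g^[a] x) fun a b hab => ?_
  exact (hinj.iterate_eq_iterate hmaps hx hx (fun i _ => hT i) (fun i _ => hT i) hab).2

end Set.InjOn

variable {V : Type*} {E : Finset (V × V)}

-- A routing of `Tᶜ` into `Sᶜ`, written as a self-map of `V` whose values on `T` are irrelevant.
structure IsLinkingMap (E : Finset (V × V)) (S T : Set V) (g : V → V) : Prop where
  step : ∀ v ∉ T, g v = v ∨ (v, g v) ∈ E
  mapsTo : MapsTo g Tᶜ Sᶜ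
  injOn : InjOn g Tᶜ

theorem IsLinkingMap.hasDisjointPaths [Finite V] {R C : Finset V} {n : ℕ} {r : Fin n → V}
    (hr : Injective r) (hrR : ∀ k, r k ∈ R) {T : Set V} (hTC : T ⊆ C) {g : V → V}
    (hg : IsLinkingMap E (range r) T g) : HasDisjointPaths E R C n := by
  classical
  have orbit_eq {k k' : Fin n} {a b : ℕ} (ha : ∀ i < a, g^[i] (r k) ∉ T)
      (hb : ∀ i < b, g^[i] (r k') ∉ T) (h : g^[a] (r k) = g^[b] (r k')) : k = k' ∧ a = b := by
    obtain ⟨hkk, hab⟩ := hg.injOn.iterate_eq_iterate hg.mapsTo (mem_range_self k)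
      (mem_range_self k') ha hb h
    exact ⟨hr hkk, hab⟩
  have hhit (k : Fin n) : ∃ a, g^[a] (r k) ∈ T :=
    hg.injOn.exists_iterate_mem hg.mapsTo (mem_range_self k)
  let J k := Nat.find (hhit k)
  have hJ (k : Fin n) {i : ℕ} (hi : i ≤ J k) : ∀ j < i, g^[j] (r k) ∉ T :=
    fun j hj => Nat.find_min (hhit k) (lt_of_lt_of_le hj hi)
  let path (k : Fin n) : List V := (List.range (J k + 1)).map fun a => g^[a] (r k)
  have mem_path {k : Fin n} {v : V} : v ∈ path k ↔ ∃ a ≤ J k, g^[a] (r k) = v := by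
    simp only [path, List.mem_map, List.mem_range, Nat.lt_succ_iff]
  refine ⟨path, fun k => ⟨⟨by simp [path], ?nodup, ?chain⟩, ?head, ?last⟩, ?disjoint⟩
  case nodup =>
    refine List.Nodup.map_on (fun a ha b hb hab => ?_) List.nodup_range
    simp only [List.mem_range, Nat.lt_succ_iff] at ha hb
    exact (orbit_eq (hJ k ha) (hJ k hb) hab).2
  case chain =>
    refine (List.isChain_map _).2 ((List.isChain_range_succ _ _).2 fun a ha => ?_)
    have haT := hJ k le_rfl a ha
    rw [iterate_succ_apply']
    refine (hg.step _ haT).resolve_left fun hfix => ?_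
    rw [← iterate_succ_apply' g] at hfix
    exact a.succ_ne_self (orbit_eq (hJ k ha) (hJ k ha.le) hfix).2
  case head => exact ⟨r k, hrR k, by simp [path, List.range_succ_eq_map]⟩
  case last =>
    refine ⟨_, hTC (Nat.find_spec (hhit k)), ?_⟩
    simp [path, List.range_succ, J]
  case disjoint =>
    intro k k' hkk' v hv hv'
    obtain ⟨a, ha, rfl⟩ := mem_path.1 hv
    obtain ⟨b, hb, hab⟩ := mem_path.1 hv'
    exact hkk' (orbit_eq (hJ k ha) (hJ k' hb) hab.symm).1

namespace List

variable {α ι : Type*} [DecidableEq α]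

theorem formPerm_eq_head_iff_eq_getLast' {l : List α} (hl : l ≠ []) {x : α} :
    l.formPerm x = l.head hl ↔ x = l.getLast hl := by
  obtain ⟨y, l, rfl⟩ := exists_cons_of_ne_nil hl
  exact formPerm_eq_head_iff_eq_getLast l x y

theorem IsChain.rel_formPerm {r : α → α → Prop} {l : List α} (hl : l.IsChain r) (hnd : l.Nodup)
    {x : α} (hx : x ∈ l) (hlast : x ≠ l.getLast (ne_nil_of_mem hx)) : r x (l.formPerm x) := by
  obtain ⟨i, hi, rfl⟩ := mem_iff_getElem.1 hx
  have hi' : i + 1 < l.length := by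
    by_contra! hlen
    exact hlast (by rw [getLast_eq_getElem]; congr 1; omega)
  rw [formPerm_apply_lt_getElem _ hnd _ hi']
  exact hl.getElem i hi'

theorem exists_injective_eq_formPerm {f : ι → List α}
    (hdisj : _root_.Pairwise fun k k' => (f k).Disjoint (f k')) :
    ∃ g : α → α, Injective g ∧ (∀ k, ∀ x ∈ f k, g x = (f k).formPerm x) ∧
      ∀ x, (∀ k, x ∉ f k) → g x = x := by
  classical
  have eq_of_mem {k k' : ι} {x : α} (hk : x ∈ f k) (hk' : x ∈ f k') : k = k' := by
    by_contra hkk'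
    exact hdisj hkk' hk hk'
  let g x := if h : ∃ k, x ∈ f k then (f h.choose).formPerm x else x
  have g_of_mem {k : ι} {x : α} (hx : x ∈ f k) : g x = (f k).formPerm x := by
    have h : ∃ k, x ∈ f k := ⟨k, hx⟩
    simp only [g, dif_pos h, eq_of_mem h.choose_spec hx]
  have g_of_notMem {x : α} (hx : ∀ k, x ∉ f k) : g x = x := by
    simp [g, hx]
  have mem_g_iff (k : ι) (x : α) : g x ∈ f k ↔ x ∈ f k := by
    by_cases hx : ∃ k', x ∈ f k'
    · obtain ⟨k', hx⟩ := hx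
      rw [g_of_mem hx]
      obtain rfl | hkk' := eq_or_ne k' k
      · exact formPerm_mem_iff_mem
      · exact iff_of_false (hdisj hkk' (formPerm_apply_mem_of_mem hx)) (hdisj hkk' hx)
    · rw [g_of_notMem (not_exists.1 hx)]
  refine ⟨g, fun x y h => ?_, fun k x => g_of_mem, fun x => g_of_notMem⟩
  by_cases hx : ∃ k, x ∈ f k
  · obtain ⟨k, hx⟩ := hx
    have hy : y ∈ f k := (mem_g_iff k y).1 (h ▸ (mem_g_iff k x).2 hx)
    rw [g_of_mem hx, g_of_mem hy] at h
    exact (f k).formPerm.injective h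
  · have hy : ∀ k, y ∉ f k := fun k hy => hx ⟨k, (mem_g_iff k x).1 (h ▸ (mem_g_iff k y).2 hy)⟩
    rwa [g_of_notMem (not_exists.1 hx), g_of_notMem hy] at h

end List

theorem HasDisjointPaths.exists_isLinkingMap {R C : Finset V} {n : ℕ}
    (h : HasDisjointPaths E R C n) :
    ∃ r c : Fin n → V, Injective r ∧ Injective c ∧ (∀ k, r k ∈ R) ∧ (∀ k, c k ∈ C) ∧
      ∃ g, IsLinkingMap E (range r) (range c) g := by
  classical
  obtain ⟨f, hf, hdisj⟩ := h
  have hne (k : Fin n) : f k ≠ [] := (hf k).1.1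
  have eq_of_mem {k k' : Fin n} {v : V} (hk : v ∈ f k) (hk' : v ∈ f k') : k = k' := by
    by_contra hkk'
    exact hdisj k k' hkk' v hk hk'
  let r k := (f k).head (hne k)
  let c k := (f k).getLast (hne k)
  have hr : Injective r := fun k k' h =>
    eq_of_mem (List.head_mem (hne k)) (show r k ∈ f k' from h ▸ List.head_mem (hne k'))
  have hc : Injective c := fun k k' h =>
    eq_of_mem (List.getLast_mem (hne k)) (show c k ∈ f k' from h ▸ List.getLast_mem (hne k'))
  -- Rotating each path cyclically, rather than stopping at its last vertex, keeps `g` injective.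
  obtain ⟨g, hg, hg_mem, hg_off⟩ :=
    List.exists_injective_eq_formPerm fun k k' hkk' v hk hk' => hdisj k k' hkk' v hk hk'
  refine ⟨r, c, hr, hc, fun k => ?_, fun k => ?_, g, ⟨fun v hv => ?_, fun v hv => ?_, hg.injOn⟩⟩
  · obtain ⟨r', hr', h⟩ := (hf k).2.1
    rw [List.head?_eq_some_head (hne k), Option.some_inj] at h
    rwa [← h] at hr'
  · obtain ⟨c', hc', h⟩ := (hf k).2.2
    rw [List.getLast?_eq_some_getLast (hne k), Option.some_inj] at h
    rwa [← h] at hc'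
  · by_cases hpath : ∃ k, v ∈ f k
    · obtain ⟨k, hk⟩ := hpath
      rw [hg_mem k v hk]
      exact .inr ((hf k).1.2.2.rel_formPerm (hf k).1.2.1 hk fun hlast => hv ⟨k, hlast.symm⟩)
    · exact .inl (hg_off v (not_exists.1 hpath))
  · rintro ⟨k', hk'⟩
    by_cases hpath : ∃ k, v ∈ f k
    · obtain ⟨k, hk⟩ := hpath
      rw [hg_mem k v hk] at hk'
      obtain rfl : k' = k :=
        eq_of_mem (List.head_mem (hne k'))
          (show r k' ∈ f k from hk' ▸ List.formPerm_apply_mem_of_mem hk)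
      exact hv ⟨k', ((List.formPerm_eq_head_iff_eq_getLast' (hne k')).1 hk'.symm).symm⟩
    · rw [hg_off v (not_exists.1 hpath)] at hk'
      exact hpath ⟨k', hk' ▸ List.head_mem (hne k')⟩

section Routing

variable {κ : Type*}

def IsRouting (E : Finset (V × V)) (u w : κ → V) (τ : Equiv.Perm κ) : Prop :=
  ∀ i, u (τ i) = w i ∨ (w i, u (τ i)) ∈ E

theorem IsLinkingMap.exists_isRouting [Finite κ] {S T : Set V} {u w : κ → V}
    (hu : Sᶜ ⊆ range u) (hw : Injective w) (hwT : ∀ i, w i ∉ T) {g : V → V}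
    (hg : IsLinkingMap E S T g) : ∃ τ, IsRouting E u w τ := by
  choose φ hφ using fun i => hu (hg.mapsTo (hwT i))
  have hφ_inj : Injective φ := fun i j h =>
    hw (hg.injOn (hwT i) (hwT j) (by rw [← hφ i, ← hφ j, h]))
  refine ⟨.ofBijective φ (Finite.injective_iff_bijective.1 hφ_inj), fun i => ?_⟩
  simpa only [Equiv.ofBijective_apply, hφ] using hg.step _ (hwT i)

theorem IsRouting.isLinkingMap {S T : Set V} {u w : κ → V} (hu : Injective u)
    (huS : range u ⊆ Sᶜ) (hw : Injective w) (hwT : Tᶜ ⊆ range w) {τ : Equiv.Perm κ}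
    (hτ : IsRouting E u w τ) : IsLinkingMap E S T (extend w (u ∘ τ) id) := by
  refine ⟨fun v hv => ?_, fun v hv => ?_, fun v hv v' hv' h => ?_⟩
  · obtain ⟨i, rfl⟩ := hwT hv
    rw [hw.extend_apply]
    exact hτ i
  · obtain ⟨i, rfl⟩ := hwT hv
    rw [hw.extend_apply]
    exact huS (mem_range_self _)
  · obtain ⟨i, rfl⟩ := hwT hv
    obtain ⟨j, rfl⟩ := hwT hv'
    rw [hw.extend_apply, hw.extend_apply] at h
    rw [τ.injective (hu h)]

end Routing

section GenericDeterminant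

open MvPolynomial

variable {R : Type*} [CommRing R] {E : Finset (V × V)} [DecidableEq V] {κ : Type*} [Fintype κ]
  {u w : κ → V}

variable (R E) in
noncomputable def genGPoly : Matrix V V (MvPolynomial {e // e ∈ E} R) :=
  Matrix.of fun j i => if h : (i, j) ∈ E then X ⟨(i, j), h⟩ else 0

variable (E) in
noncomputable def edgeDegree (i j : V) : {e // e ∈ E} →₀ ℕ :=
  if h : (i, j) ∈ E then Finsupp.single ⟨(i, j), h⟩ 1 else 0

theorem edgeDegree_apply (i j : V) (e : {e // e ∈ E}) :
    edgeDegree E i j e = if e.1 = (i, j) then 1 else 0 := by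
  unfold edgeDegree
  split_ifs with h he he
  · simp [Finsupp.single_apply, Subtype.ext_iff, he]
  · simp [Subtype.ext_iff, Ne.symm he]
  · exact absurd (he ▸ e.2) h
  · rfl

theorem one_sub_genGPoly_apply_eq_monomial (hloop : ∀ i, (i, i) ∉ E) {i j : V}
    (h : j = i ∨ (i, j) ∈ E) :
    (1 - genGPoly R E) j i = monomial (edgeDegree E i j) (if j = i then 1 else -1) := by
  rcases eq_or_ne j i with rfl | hji
  · simp [genGPoly, edgeDegree, hloop]
  · have hE := h.resolve_left hji
    simp [genGPoly, edgeDegree, hE, hji, X, map_neg]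

theorem one_sub_genGPoly_apply_eq_zero {i j : V} (hji : j ≠ i) (hE : (i, j) ∉ E) :
    (1 - genGPoly R E) j i = 0 := by
  simp [genGPoly, hE, hji]

variable (E) in
noncomputable def routingDegree (u w : κ → V) (τ : Equiv.Perm κ) : {e // e ∈ E} →₀ ℕ :=
  ∑ i, edgeDegree E (w i) (u (τ i))

theorem routingDegree_apply_ne_zero_iff (hw : Injective w) (τ : Equiv.Perm κ) {i : κ} {x : V}
    (h : (w i, x) ∈ E) : routingDegree E u w τ ⟨(w i, x), h⟩ ≠ 0 ↔ u (τ i) = x := by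
  simp only [routingDegree, Finsupp.coe_finsetSum, Finset.sum_apply, edgeDegree_apply, ne_eq,
    Finset.sum_eq_zero_iff, Finset.mem_univ, true_implies, ite_eq_right_iff, one_ne_zero,
    imp_false, not_forall, not_not, Prod.ext_iff, hw.eq_iff]
  exact ⟨fun ⟨j, hij, hx⟩ => hij ▸ hx.symm, fun hx => ⟨i, rfl, hx.symm⟩⟩

theorem IsRouting.eq_of_routingDegree_eq (hu : Injective u) (hw : Injective w)
    {τ τ' : Equiv.Perm κ} (hτ : IsRouting E u w τ) (hτ' : IsRouting E u w τ')
    (h : routingDegree E u w τ = routingDegree E u w τ') : τ = τ' := by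
  have transfer {σ σ' : Equiv.Perm κ} (h : routingDegree E u w σ = routingDegree E u w σ') {i : κ}
      (hE : (w i, u (σ i)) ∈ E) : u (σ i) = u (σ' i) :=
    ((routingDegree_apply_ne_zero_iff hw σ' hE).1
      (h ▸ (routingDegree_apply_ne_zero_iff hw σ hE).2 rfl)).symm
  ext i
  refine hu ?_
  by_cases hE : (w i, u (τ i)) ∈ E
  · exact transfer h hE
  by_cases hE' : (w i, u (τ' i)) ∈ E
  · exact (transfer h.symm hE').symm
  · rw [(hτ i).resolve_right hE, (hτ' i).resolve_right hE']

theorem IsRouting.prod_one_sub_genGPoly (hloop : ∀ i, (i, i) ∉ E) {τ : Equiv.Perm κ}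
    (hτ : IsRouting E u w τ) : ∏ i, (1 - genGPoly R E) (u (τ i)) (w i) =
      monomial (routingDegree E u w τ) (∏ i, if u (τ i) = w i then 1 else -1) := by
  rw [routingDegree, monomial_sum_prod]
  exact Finset.prod_congr rfl fun i _ => one_sub_genGPoly_apply_eq_monomial hloop (hτ i)

theorem prod_one_sub_genGPoly_eq_zero {τ : Equiv.Perm κ} (hτ : ¬IsRouting E u w τ) :
    ∏ i, (1 - genGPoly R E) (u (τ i)) (w i) = 0 := by
  obtain ⟨i, hi⟩ := not_forall.1 hτ
  rw [not_or] at hi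
  exact Finset.prod_eq_zero (Finset.mem_univ i) (one_sub_genGPoly_apply_eq_zero hi.1 hi.2)

theorem IsRouting.coeff_det_one_sub_genGPoly_submatrix [DecidableEq κ] (hloop : ∀ i, (i, i) ∉ E)
    (hu : Injective u) (hw : Injective w) {τ : Equiv.Perm κ} (hτ : IsRouting E u w τ) :
    coeff (routingDegree E u w τ) ((1 - genGPoly R E).submatrix u w).det =
      Equiv.Perm.sign τ • ∏ i, if u (τ i) = w i then (1 : R) else -1 := by
  rw [det_apply, coeff_sum, Finset.sum_eq_single τ (fun σ _ hσ => ?_) (by simp)]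
  · change coeff _ (_ • ∏ i, (1 - genGPoly R E) (u (τ i)) (w i)) = _
    rw [coeff_smul, hτ.prod_one_sub_genGPoly hloop, coeff_monomial, if_pos rfl]
  · change coeff _ (_ • ∏ i, (1 - genGPoly R E) (u (σ i)) (w i)) = 0
    rw [coeff_smul]
    by_cases hσ' : IsRouting E u w σ
    · rw [hσ'.prod_one_sub_genGPoly hloop, coeff_monomial,
        if_neg fun h => hσ (hσ'.eq_of_routingDegree_eq hu hw hτ h), smul_zero]
    · rw [prod_one_sub_genGPoly_eq_zero hσ', coeff_zero, smul_zero]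

theorem det_one_sub_genGPoly_submatrix_ne_zero_iff [Nontrivial R] [DecidableEq κ]
    (hloop : ∀ i, (i, i) ∉ E) (hu : Injective u) (hw : Injective w) :
    ((1 - genGPoly R E).submatrix u w).det ≠ 0 ↔ ∃ τ, IsRouting E u w τ := by
  constructor
  · intro h
    by_contra! hτ
    rw [det_apply] at h
    exact h (Finset.sum_eq_zero fun τ _ =>
      smul_eq_zero_of_right _ (prod_one_sub_genGPoly_eq_zero (hτ τ)))
  · rintro ⟨τ, hτ⟩ h0
    have hcoeff := hτ.coeff_det_one_sub_genGPoly_submatrix (R := R) hloop hu hw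
    have hunit : IsUnit (∏ i, if u (τ i) = w i then (1 : R) else -1) :=
      IsUnit.prod_univ_iff.2 fun i => by split_ifs <;> simp
    rw [h0, coeff_zero, Units.smul_def, zsmul_eq_mul] at hcoeff
    exact (((Equiv.Perm.sign τ).isUnit.map (Int.castRingHom R)).mul hunit).ne_zero hcoeff.symm

end GenericDeterminant

section GenericResponse

open MvPolynomial

variable {E : Finset (V × V)} [Fintype V] [DecidableEq V] {κ : Type*} [Fintype κ] [DecidableEq κ]
  {u w : κ → V}

theorem genG_eq_map :
    genG E = (genGPoly ℝ E).map (algebraMap _ (FractionRing (MvPolynomial {e // e ∈ E} ℝ))) := by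
  ext j i
  by_cases h : (i, j) ∈ E <;> simp [genG, genGPoly, h]

theorem det_one_sub_genG_submatrix_ne_zero_iff (hloop : ∀ i, (i, i) ∉ E) (hu : Injective u)
    (hw : Injective w) : ((1 - genG E).submatrix u w).det ≠ 0 ↔ ∃ τ, IsRouting E u w τ := by
  let φ := algebraMap (MvPolynomial {e // e ∈ E} ℝ) (FractionRing (MvPolynomial {e // e ∈ E} ℝ))
  have hmap : (1 - genG E).submatrix u w = ((1 - genGPoly ℝ E).submatrix u w).map φ := by
    rw [genG_eq_map, ← submatrix_map, Matrix.map_sub _ (map_sub φ),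
      Matrix.map_one φ (map_zero φ) (map_one φ)]
  rw [hmap, ← RingHom.mapMatrix_apply, ← RingHom.map_det, ne_eq,
    map_eq_zero_iff φ (IsFractionRing.injective _ _), ← ne_eq]
  exact det_one_sub_genGPoly_submatrix_ne_zero_iff hloop hu hw

theorem det_one_sub_genG_ne_zero (hloop : ∀ i, (i, i) ∉ E) : (1 - genG E).det ≠ 0 := by
  simpa using (det_one_sub_genG_submatrix_ne_zero_iff hloop injective_id injective_id).2
    ⟨1, fun _ => .inl rfl⟩

end GenericResponse

theorem det_genT_submatrix_ne_zero_iff [Fintype V] [DecidableEq V] {E : Finset (V × V)}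
    (hloop : ∀ i, (i, i) ∉ E) {n : ℕ} {r c : Fin n → V} (hr : Injective r) (hc : Injective c) :
    ((genT E).submatrix c r).det ≠ 0 ↔ ∃ g, IsLinkingMap E (range r) (range c) g := by
  obtain ⟨e₁, rfl⟩ := hr.exists_sum_equiv
  obtain ⟨e₂, rfl⟩ := hc.exists_sum_equiv
  have hu := e₁.injective.comp Sum.inr_injective
  have hw := e₂.injective.comp Sum.inr_injective
  rw [genT, det_submatrix_inv_ne_zero_iff _ (det_one_sub_genG_ne_zero hloop).isUnit,
    det_one_sub_genG_submatrix_ne_zero_iff hloop hu hw]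
  constructor
  · rintro ⟨τ, hτ⟩
    exact ⟨_, hτ.isLinkingMap hu (e₁.range_comp_inr).subset hw (e₂.range_comp_inr).superset⟩
  · rintro ⟨g, hg⟩
    exact hg.exists_isRouting (e₁.range_comp_inr).superset hw
      fun i => (e₂.range_comp_inr).subset (mem_range_self i)

end

/-- The rank of the generic submatrix `𝕋_{C,R}` equals `b(R→C)`, the maximum number of
pairwise vertex-disjoint directed paths from `R` to `C`. -/
theorem stmt_12 {V : Type*} [Fintype V] [DecidableEq V]
    (E : Finset (V × V)) (hloop : ∀ i : V, (i, i) ∉ E)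
    (R C : Finset V) :
    (Matrix.of fun (c : {c : V // c ∈ C}) (r : {r : V // r ∈ R}) =>
      genT E c.1 r.1).rank = maxDisjointPaths E R C := by
  set M := Matrix.of fun (c : {c : V // c ∈ C}) (r : {r : V // r ∈ R}) => genT E c.1 r.1
  have le_rank {n : ℕ} (h : HasDisjointPaths E R C n) : n ≤ M.rank := by
    obtain ⟨r, c, hr, hc, hrR, hcC, g, hg⟩ := h.exists_isLinkingMap
    have hdet := (det_genT_submatrix_ne_zero_iff hloop hr hc).2 ⟨g, hg⟩
    simpa using M.card_le_rank_of_det_submatrix_ne_zero (fun k => ⟨c k, hcC k⟩)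
      (fun k => ⟨r k, hrR k⟩) hdet
  have rank_paths : HasDisjointPaths E R C M.rank := by
    obtain ⟨f, g, hf, hg, hdet⟩ := M.exists_det_submatrix_ne_zero
    have hr := Subtype.val_injective.comp hg
    obtain ⟨l, hl⟩ := (det_genT_submatrix_ne_zero_iff hloop hr
      (Subtype.val_injective.comp hf)).1 hdet
    exact hl.hasDisjointPaths hr (fun k => (g k).2) (Set.range_subset_iff.2 fun k => (f k).2)
  exact le_antisymm (le_csSup ⟨M.rank, fun n => le_rank⟩ rank_paths)
    (csSup_le ⟨_, rank_paths⟩ fun n => le_rank)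
end

section
/- Let C̄, R̄ ⊆ V with |C̄| = |R̄|. Suppose there exists a bijection σ : C̄ → R̄ such that 𝕋 c (σ c) ≠ 0 for every c ∈ C̄ (a maximum matching of size |C̄| in the bipartite graph of nonzero generic entries), while b(R̄→C̄) < |C̄|. Then the family of nonzero entries of the submatrix of 𝕋 with rows C̄ and columns R̄, namely (𝕋 c r) indexed by the pairs (c,r) ∈ C̄ × R̄ with 𝕋 c r ≠ 0, is not algebraically independent over ℝ. -/
open Matrix

/-!
By Jacobi's complementary-minor identity, for the invertible `A = 1 - 𝔾` the minor of
`𝕋 = A⁻¹` with rows `C̄` and columns `σ(C̄) = R̄` vanishes iff the minor of `A` with rows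
`V ∖ R̄` and columns `V ∖ C̄` does. A nonzero term of the latter is a bijection
`s : V ∖ C̄ → V ∖ R̄` such that `w → s w` is an edge whenever `s w ≠ w`; following `s` from each
`r ∈ R̄` until `C̄` is reached gives `|R̄|` vertex-disjoint paths, contradicting `b(R̄→C̄) < |C̄|`.
Hence `det 𝕋[C̄, R̄] = 0`, a polynomial relation among the nonzero entries of `𝕋[C̄, R̄]`. It is
nontrivial: replacing each nonzero entry by an indeterminate and specialising the entries on the
matching `σ` to `1` and all others to `0` turns that determinant into `det 1 = 1`.
-/
section Linkage

variable {V : Type*} [DecidableEq V] {R C : Finset V} (s : {v // v ∉ C} → {v // v ∉ R})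

def walkStep (v : V) : V := if h : v ∈ C then v else s ⟨v, h⟩

def walk (r : V) (k : ℕ) : V := (walkStep s)^[k] r

variable {s}

lemma walk_succ_of_notMem {r : V} {k : ℕ} (h : walk s r k ∉ C) :
    walk s r (k + 1) = s ⟨walk s r k, h⟩ := by
  simp only [walk, Function.iterate_succ_apply', walkStep]
  exact dif_neg h

lemma eq_of_walk_eq (hs : Function.Injective s) {r r' : V} (hr : r ∈ R) (hr' : r' ∈ R) :
    ∀ {a b : ℕ}, (∀ j < a, walk s r j ∉ C) → (∀ j < b, walk s r' j ∉ C) →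
      walk s r a = walk s r' b → a = b ∧ r = r'
  | 0, 0, _, _, h => ⟨rfl, h⟩
  | 0, b + 1, _, hb, h => by
    rw [walk_succ_of_notMem (hb b b.lt_succ_self)] at h
    exact absurd (show walk s r 0 ∈ R from hr) (h ▸ (s _).2)
  | a + 1, 0, ha, _, h => by
    rw [walk_succ_of_notMem (ha a a.lt_succ_self)] at h
    exact absurd (show walk s r' 0 ∈ R from hr') (h ▸ (s _).2)
  | a + 1, b + 1, ha, hb, h => by
    rw [walk_succ_of_notMem (ha a a.lt_succ_self), walk_succ_of_notMem (hb b b.lt_succ_self)] at h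
    obtain ⟨rfl, rfl⟩ := eq_of_walk_eq hs hr hr' (fun j hj => ha j (hj.trans a.lt_succ_self))
      (fun j hj => hb j (hj.trans b.lt_succ_self)) (congrArg Subtype.val (hs (Subtype.ext h)))
    exact ⟨rfl, rfl⟩

lemma exists_walk_mem [Finite V] (hs : Function.Injective s) {r : V} (hr : r ∈ R) :
    ∃ k, walk s r k ∈ C := by
  by_contra! h
  obtain ⟨a, b, hab, heq⟩ := Finite.exists_ne_map_eq_of_infinite (walk s r)
  exact hab (eq_of_walk_eq hs hr hr (fun j _ => h j) (fun j _ => h j) heq).1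

variable (s) in
noncomputable def hitTime (r : V) : ℕ := sInf {k | walk s r k ∈ C}

lemma walk_hitTime_mem [Finite V] (hs : Function.Injective s) {r : V} (hr : r ∈ R) :
    walk s r (hitTime s r) ∈ C :=
  Nat.sInf_mem (exists_walk_mem hs hr)

lemma walk_notMem_of_lt_hitTime {r : V} {k : ℕ} (hk : k < hitTime s r) : walk s r k ∉ C :=
  Nat.notMem_of_lt_sInf hk

lemma eq_of_walk_eq_of_le_hitTime (hs : Function.Injective s) {r r' : V} (hr : r ∈ R)
    (hr' : r' ∈ R) {a b : ℕ} (ha : a ≤ hitTime s r) (hb : b ≤ hitTime s r')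
    (h : walk s r a = walk s r' b) : a = b ∧ r = r' :=
  eq_of_walk_eq hs hr hr' (fun _ hj => walk_notMem_of_lt_hitTime (hj.trans_le ha))
    (fun _ hj => walk_notMem_of_lt_hitTime (hj.trans_le hb)) h

variable (s) in
noncomputable def walkPath (r : V) : List V := (List.range (hitTime s r + 1)).map (walk s r)

lemma mem_walkPath {r v : V} : v ∈ walkPath s r ↔ ∃ k ≤ hitTime s r, walk s r k = v := by
  simp [walkPath]

lemma isDiPathFromTo_walkPath [Finite V] {E : Finset (V × V)} (hs : Function.Injective s)
    (hE : ∀ w, (s w : V) ≠ w → (w.1, (s w).1) ∈ E) {r : V} (hr : r ∈ R) :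
    IsDiPathFromTo E R C (walkPath s r) := by
  refine ⟨⟨by simp [walkPath], ?_, ?_⟩, ⟨r, hr, by simp [walkPath, List.range_succ_eq_map]; rfl⟩,
    ⟨_, walk_hitTime_mem hs hr, by simp [walkPath, List.range_succ, List.getLast?_map]⟩⟩
  · refine List.Nodup.map_on (fun a ha b hb hab => ?_) List.nodup_range
    simp only [List.mem_range, Nat.lt_succ_iff] at ha hb
    exact (eq_of_walk_eq_of_le_hitTime hs hr hr ha hb hab).1
  · rw [walkPath, List.Chain', List.isChain_map, List.isChain_range_succ]
    intro k hk
    have hkC := walk_notMem_of_lt_hitTime hk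
    rw [walk_succ_of_notMem hkC]
    refine hE ⟨_, hkC⟩ fun hfix => ?_
    rw [← walk_succ_of_notMem hkC] at hfix
    have := (eq_of_walk_eq_of_le_hitTime hs hr hr hk hk.le hfix).1
    omega

theorem hasDisjointPaths_of_injective [Finite V] {E : Finset (V × V)}
    (hs : Function.Injective s) (hE : ∀ w, (s w : V) ≠ w → (w.1, (s w).1) ∈ E) :
    HasDisjointPaths E R C R.card := by
  refine ⟨fun k => walkPath s (R.equivFin.symm k), fun k => isDiPathFromTo_walkPath hs hE
    (R.equivFin.symm k).2, fun k l hkl v hvk hvl => hkl (R.equivFin.symm.injective ?_)⟩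
  obtain ⟨a, ha, rfl⟩ := mem_walkPath.1 hvk
  obtain ⟨b, hb, hab⟩ := mem_walkPath.1 hvl
  exact Subtype.ext (eq_of_walk_eq_of_le_hitTime hs (R.equivFin.symm k).2
    (R.equivFin.symm l).2 ha hb hab.symm).2

end Linkage

section MaxDisjointPaths

variable {V : Type*} [Fintype V] {E : Finset (V × V)} {R C : Finset V} {n : ℕ}

lemma HasDisjointPaths.le_card (h : HasDisjointPaths E R C n) : n ≤ Fintype.card V := by
  obtain ⟨f, hf, hdisj⟩ := h
  have hne k : f k ≠ [] := (hf k).1.1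
  have hinj : Function.Injective fun k => (f k).head (hne k) := fun k l hkl => by
    simp only at hkl
    by_contra hkl'
    exact hdisj k l hkl' _ (List.head_mem _) (by rw [hkl]; exact List.head_mem _)
  simpa using Fintype.card_le_of_injective _ hinj

lemma HasDisjointPaths.le_maxDisjointPaths (h : HasDisjointPaths E R C n) :
    n ≤ maxDisjointPaths E R C :=
  le_csSup ⟨Fintype.card V, fun _ hm => hm.le_card⟩ h

end MaxDisjointPaths

namespace Matrix

variable {l m n K : Type*} [Fintype l] [Fintype m] [Fintype n] [DecidableEq l] [DecidableEq m]
  [DecidableEq n] [CommRing K]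

lemma exists_perm_forall_ne_zero_of_det_ne_zero {A : Matrix n n K} (h : A.det ≠ 0) :
    ∃ π : Equiv.Perm n, ∀ i, A (π i) i ≠ 0 := by
  contrapose! h
  rw [det_apply]
  refine Finset.sum_eq_zero fun π _ => ?_
  obtain ⟨i, hi⟩ := h π
  exact smul_eq_zero_of_right _ (Finset.prod_eq_zero (Finset.mem_univ i) hi)

lemma det_mul_det_inv_toBlocks₁₁ (B : Matrix (m ⊕ n) (m ⊕ n) K) (hB : IsUnit B.det) :
    B.det * B⁻¹.toBlocks₁₁.det = B.toBlocks₂₂.det := by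
  have hinv := mul_nonsing_inv B hB
  have key : B * fromBlocks B⁻¹.toBlocks₁₁ 0 B⁻¹.toBlocks₂₁ 1 =
      fromBlocks 1 B.toBlocks₁₂ 0 B.toBlocks₂₂ := by
    ext i (j | j)
    · have := congrFun (congrFun hinv i) (Sum.inl j)
      rcases i with i | i <;>
        simpa [mul_apply, Fintype.sum_sum_type, toBlocks₁₁, toBlocks₂₁, one_apply] using this
    · rcases i with i | i <;>
        simp [mul_apply, Fintype.sum_sum_type, toBlocks₁₂, toBlocks₂₂, one_apply]
  simpa [det_fromBlocks_zero₁₂, det_fromBlocks_zero₂₁] using congrArg det key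

lemma det_inv_submatrix_inl_eq_zero_iff {A : Matrix l l K} (hA : IsUnit A.det)
    (e f : m ⊕ n ≃ l) :
    (A⁻¹.submatrix (f ∘ Sum.inl) (e ∘ Sum.inl)).det = 0 ↔
      (A.submatrix (e ∘ Sum.inr) (f ∘ Sum.inr)).det = 0 := by
  have hB : IsUnit (A.submatrix e f).det := by
    rwa [← isUnit_iff_isUnit_det, isUnit_submatrix_equiv, isUnit_iff_isUnit_det]
  have hJacobi : (A.submatrix e f).det * (A⁻¹.submatrix (f ∘ Sum.inl) (e ∘ Sum.inl)).det =
      (A.submatrix (e ∘ Sum.inr) (f ∘ Sum.inr)).det := by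
    have := det_mul_det_inv_toBlocks₁₁ _ hB
    rwa [inv_submatrix_equiv] at this
  rw [← hJacobi, hB.mul_right_eq_zero]

end Matrix

section GenericPattern

open MvPolynomial

variable {R K m n : Type*} [CommRing R]

def Matrix.nonzeroEntries [Zero K] (M : Matrix m n K) : {p : m × n // M p.1 p.2 ≠ 0} → K :=
  fun p => M p.1.1 p.1.2

variable (R) in
open Classical in
noncomputable def genericPattern [Zero K] (M : Matrix m n K) :
    Matrix m n (MvPolynomial {p : m × n // M p.1 p.2 ≠ 0} R) :=
  Matrix.of fun i j => if h : M i j ≠ 0 then X ⟨(i, j), h⟩ else 0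

lemma map_aeval_genericPattern [CommRing K] [Algebra R K] (M : Matrix m n K) :
    (genericPattern R M).map (aeval M.nonzeroEntries) = M := by
  ext i j
  by_cases h : M i j = 0 <;> simp [genericPattern, Matrix.nonzeroEntries, h]

lemma det_genericPattern_submatrix_ne_zero [Zero K] [Nontrivial R] [Fintype m] [DecidableEq m]
    (M : Matrix m n K) (σ : m ≃ n) (hσ : ∀ i, M i (σ i) ≠ 0) :
    ((genericPattern R M).submatrix id σ).det ≠ 0 := by
  classical
  let diagonalPoint : {p : m × n // M p.1 p.2 ≠ 0} → R := fun p =>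
    if p.1.2 = σ p.1.1 then 1 else 0
  have hone : ((genericPattern R M).submatrix id σ).map (aeval diagonalPoint) = 1 := by
    ext i j
    by_cases hij : i = j
    · subst hij
      simp [genericPattern, hσ i, diagonalPoint]
    · by_cases h : M i (σ j) = 0 <;> simp [genericPattern, h, diagonalPoint, hij, Ne.symm hij]
  intro h
  have := congrArg (aeval diagonalPoint) h
  rw [AlgHom.map_det, AlgHom.mapMatrix_apply, hone, Matrix.det_one, map_zero] at this
  exact one_ne_zero this

lemma det_submatrix_ne_zero_of_algebraicIndependent [CommRing K] [Algebra R K] [Nontrivial R]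
    [Fintype m] [DecidableEq m]
    (M : Matrix m n K) (σ : m ≃ n) (hσ : ∀ i, M i (σ i) ≠ 0)
    (hM : AlgebraicIndependent R M.nonzeroEntries) :
    (M.submatrix id σ).det ≠ 0 := by
  intro hdet
  refine det_genericPattern_submatrix_ne_zero (R := R) M σ hσ (hM.eq_zero_of_aeval_eq_zero _ ?_)
  rw [AlgHom.map_det, AlgHom.mapMatrix_apply, ← Matrix.submatrix_map, map_aeval_genericPattern,
    hdet]

end GenericPattern

section GenericNetwork

variable {V : Type*} [Fintype V] [DecidableEq V] (E : Finset (V × V))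

lemma isUnit_det_one_sub_genG : IsUnit (1 - genG E).det := by
  let G₀ : Matrix V V (MvPolynomial {e : V × V // e ∈ E} ℝ) :=
    Matrix.of fun j i => if h : (i, j) ∈ E then MvPolynomial.X ⟨(i, j), h⟩ else 0
  have hG : 1 - genG E = (algebraMap _ _).mapMatrix (1 - G₀) := by
    ext j i
    by_cases h : (i, j) ∈ E <;> simp [genG, G₀, h, Matrix.one_apply]
  have hconst : MvPolynomial.constantCoeff.mapMatrix (1 - G₀) = 1 := by
    ext j i
    by_cases h : (i, j) ∈ E <;> simp [G₀, h, Matrix.one_apply]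
  have hdet : MvPolynomial.constantCoeff (1 - G₀).det = 1 := by
    rw [RingHom.map_det, hconst, Matrix.det_one]
  rw [hG, ← RingHom.map_det, isUnit_iff_ne_zero, ne_eq, IsFractionRing.to_map_eq_zero_iff]
  rintro h
  simp [h] at hdet

lemma mem_of_one_sub_genG_ne_zero {i j : V} (hij : j ≠ i) (h : (1 - genG E) j i ≠ 0) :
    (i, j) ∈ E := by
  contrapose! h
  simp [genG, h, hij]

lemma det_one_sub_genG_submatrix_eq_zero {Cb Rb : Finset V} (τ : {v // v ∉ Cb} ≃ {v // v ∉ Rb})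
    (hb : maxDisjointPaths E Rb Cb < Rb.card) :
    ((1 - genG E).submatrix (fun w => (τ w : V)) (Subtype.val : {v // v ∉ Cb} → V)).det = 0 := by
  by_contra hdet
  obtain ⟨π, hπ⟩ := Matrix.exists_perm_forall_ne_zero_of_det_ne_zero hdet
  have hpaths := hasDisjointPaths_of_injective (E := E) (τ.injective.comp π.injective)
    fun w hw => mem_of_one_sub_genG_ne_zero E hw (hπ w)
  exact hb.not_ge hpaths.le_maxDisjointPaths

lemma det_genT_submatrix_eq_zero {Cb Rb : Finset V} (σ : {c // c ∈ Cb} ≃ {r // r ∈ Rb})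
    (hb : maxDisjointPaths E Rb Cb < Cb.card) :
    ((genT E).submatrix (Subtype.val : {c // c ∈ Cb} → V) (fun c => (σ c : V))).det = 0 := by
  have hcard : Cb.card = Rb.card := by simpa using Fintype.card_congr σ
  have hcompl : Fintype.card {v // v ∉ Cb} = Fintype.card {v // v ∉ Rb} := by
    simp [Fintype.card_subtype_compl, hcard]
  let τ := Fintype.equivOfCardEq hcompl
  exact (Matrix.det_inv_submatrix_inl_eq_zero_iff (isUnit_det_one_sub_genG E)
    ((Equiv.sumCongr σ τ).trans (Equiv.sumCompl (· ∈ Rb))) (Equiv.sumCompl (· ∈ Cb))).2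
    (det_one_sub_genG_submatrix_eq_zero E τ (hcard ▸ hb))

end GenericNetwork

theorem stmt_13_general {V : Type*} [Fintype V] [DecidableEq V]
    (E : Finset (V × V))
    (Cb Rb : Finset V)
    (σ : {c : V // c ∈ Cb} ≃ {r : V // r ∈ Rb})
    (hσ : ∀ c : {c : V // c ∈ Cb}, genT E c.1 (σ c).1 ≠ 0)
    (hb : maxDisjointPaths E Rb Cb < Cb.card) :
    ¬ AlgebraicIndependent ℝ
        (fun p : {p : {c : V // c ∈ Cb} × {r : V // r ∈ Rb} // genT E p.1.1 p.2.1 ≠ 0} =>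
          genT E p.1.1.1 p.1.2.1) := fun hind =>
  det_submatrix_ne_zero_of_algebraicIndependent ((genT E).submatrix Subtype.val Subtype.val) σ hσ
    hind (det_genT_submatrix_eq_zero E σ hb)

/-- If the bipartite graph of nonzero generic entries between `C̄` and `R̄` has a perfect
matching (a bijection `σ` with `𝕋 c (σ c) ≠ 0` for all `c ∈ C̄`), but `b(R̄→C̄) < |C̄|`,
then the nonzero entries of the submatrix `𝕋_{C̄,R̄}` are algebraically dependent over
`ℝ`. -/
theorem stmt_13 {V : Type*} [Fintype V] [DecidableEq V]
    (E : Finset (V × V)) (hloop : ∀ i : V, (i, i) ∉ E)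
    (Cb Rb : Finset V) (hcard : Cb.card = Rb.card)
    (σ : {c : V // c ∈ Cb} ≃ {r : V // r ∈ Rb})
    (hσ : ∀ c : {c : V // c ∈ Cb}, genT E c.1 (σ c).1 ≠ 0)
    (hb : maxDisjointPaths E Rb Cb < Cb.card) :
    ¬ AlgebraicIndependent ℝ
        (fun p : {p : {c : V // c ∈ Cb} × {r : V // r ∈ Rb} // genT E p.1.1 p.2.1 ≠ 0} =>
          genT E p.1.1.1 p.1.2.1) :=
  stmt_13_general E Cb Rb σ hσ hb
end
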